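/- arXiv:2211.06809 — 2 statements merged into one kernel-verified Lean document; each statement's English description precedes it below -/
import Mathlib

section
/- Let σ ∈ {-1,+1}^V, let x ∈ V, and let σ^x denote the configuration obtained from σ by flipping only the spin at x. Set r = (1−ε) + ε · max_{u∈V} ∑_{y∈V} tanh(β |J_{u,y}| / 2). Then there exists a coupling of P_{β,ε}(σ,·) and P_{β,ε}(σ^x,·), i.e. a probability distribution γ on pairs (τ,τ') ∈ {-1,+1}^V × {-1,+1}^V whose first marginal is P_{β,ε}(σ,·) and whose second marginal is P_{β,ε}(σ^x,·), such that the expected Hamming distance satisfies ∑_{(τ,τ')} γ(τ,τ') · |{y ∈ V : τ_y ≠ τ'_y}| ≤ r. -/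
open Real Finset

variable {V : Type*}

/-- The real value of a Boolean spin: `true ↦ +1`, `false ↦ -1`. -/
def sp (b : Bool) : ℝ := if b then 1 else -1

/-- The cavity field `h̃_x(σ) = ∑_y J_{x,y} σ_y + h_x`. -/
noncomputable def cavity [Fintype V] (J : V → V → ℝ) (h : V → ℝ) (σ : V → Bool) (x : V) : ℝ :=
  (∑ y, J x y * sp (σ y)) + h x

/-- The ε-SCA flip probability `p_x(σ) = e^{-(β/2) h̃_x(σ) σ_x} / (2 cosh((β/2) h̃_x(σ)))`. -/
noncomputable def flipProb [Fintype V] (J : V → V → ℝ) (h : V → ℝ) (β : ℝ)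
    (σ : V → Bool) (x : V) : ℝ :=
  Real.exp (-(β / 2) * cavity J h σ x * sp (σ x)) / (2 * Real.cosh ((β / 2) * cavity J h σ x))

/-- The ε-SCA transition kernel
`P_{β,ε}(σ,τ) = ∏_{x : τ_x = -σ_x} ε p_x(σ) · ∏_{y : τ_y = σ_y} (1 - ε p_y(σ))`. -/
noncomputable def Peps [Fintype V] [DecidableEq V] (J : V → V → ℝ) (h : V → ℝ) (β ε : ℝ)
    (σ τ : V → Bool) : ℝ :=
  (∏ x ∈ univ.filter (fun x => τ x ≠ σ x), ε * flipProb J h β σ x) *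
    ∏ y ∈ univ.filter (fun y => τ y = σ y), (1 - ε * flipProb J h β σ y)

/-!
Couple the two steps site by site. Both kernels are product measures, so the product of the
maximal couplings of the one-site laws couples them, and its expected Hamming distance is the
sum over `y` of the differences between the probabilities that the new spin at `y` is `+1`.
At `x` the kept spins differ, which costs `1 - ε`; at every `y` the cavity field moves by
`2 |J_{y,x}|`, and `|tanh a - tanh b| ≤ 2 tanh (|a - b| / 2)` bounds the heat-bath part by
`ε tanh (β |J_{y,x}| / 2)`. Symmetry of `J` turns this column sum into a row sum.
-/

namespace Real

theorem two_mul_tanh_half (d : ℝ) : 2 * tanh (d / 2) = sinh d / cosh (d / 2) ^ 2 := by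
  have hc := cosh_pos (d / 2)
  have hd := sinh_two_mul (d / 2)
  rw [mul_div_cancel₀ d two_ne_zero] at hd
  rw [tanh_eq_sinh_div_cosh, hd]
  field_simp

theorem abs_tanh_sub_tanh_le (a b : ℝ) : |tanh a - tanh b| ≤ 2 * tanh (|a - b| / 2) := by
  have hca := cosh_pos a
  have hcb := cosh_pos b
  have hsub : tanh a - tanh b = sinh (a - b) / (cosh a * cosh b) := by
    rw [tanh_eq_sinh_div_cosh, tanh_eq_sinh_div_cosh, sinh_sub]
    field_simp
  -- `cosh a cosh b = (cosh (a + b) + cosh (a - b)) / 2 ≥ (1 + cosh (a - b)) / 2`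
  have hcosh : cosh (|a - b| / 2) ^ 2 ≤ cosh a * cosh b := by
    have hdouble := cosh_two_mul (|a - b| / 2)
    rw [mul_div_cancel₀ _ two_ne_zero, cosh_abs, cosh_sub] at hdouble
    nlinarith [cosh_add a b, one_le_cosh (a + b), cosh_sq (|a - b| / 2)]
  rw [hsub, two_mul_tanh_half, abs_div, abs_of_pos (mul_pos hca hcb), abs_sinh]
  exact div_le_div_of_nonneg_left (sinh_nonneg_iff.mpr (abs_nonneg _))
    (pow_pos (cosh_pos _) 2) hcosh

end Real

def boolLaw (p : ℝ) (b : Bool) : ℝ := if b then p else 1 - p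

/-- The maximal coupling of `boolLaw p` and `boolLaw q`. -/
noncomputable def boolCoupling (p q : ℝ) : Bool → Bool → ℝ
  | true, true => min p q
  | false, false => min (1 - p) (1 - q)
  | true, false => max (p - q) 0
  | false, true => max (q - p) 0

theorem boolCoupling_nonneg {p q : ℝ} (hp : p ∈ Set.Icc (0 : ℝ) 1) (hq : q ∈ Set.Icc (0 : ℝ) 1)
    (s t : Bool) : 0 ≤ boolCoupling p q s t := by
  obtain ⟨hp0, hp1⟩ := hp
  obtain ⟨hq0, hq1⟩ := hq
  cases s <;> cases t <;> simp only [boolCoupling] <;> grind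

section BoolCoupling

variable (p q : ℝ)

theorem sum_boolCoupling_right (s : Bool) : ∑ t, boolCoupling p q s t = boolLaw p s := by
  cases s <;> simp [boolCoupling, boolLaw] <;> grind

theorem sum_boolCoupling_left (t : Bool) : ∑ s, boolCoupling p q s t = boolLaw q t := by
  cases t <;> simp [boolCoupling, boolLaw] <;> grind

theorem sum_sum_boolCoupling : ∑ s, ∑ t, boolCoupling p q s t = 1 := by
  simp only [sum_boolCoupling_right]
  simp [boolLaw]

theorem sum_sum_boolCoupling_mul_ne :
    ∑ s, ∑ t, boolCoupling p q s t * (if s ≠ t then 1 else 0) = |p - q| := by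
  simp only [boolCoupling, Fintype.sum_bool]
  grind

end BoolCoupling

section ProductCoupling

variable {ι α : Type*} [Fintype ι] [DecidableEq ι] [Fintype α]

theorem sum_sum_prod_eq_prod_sum_sum (F : ι → α → α → ℝ) :
    ∑ τ : ι → α, ∑ τ' : ι → α, ∏ i, F i (τ i) (τ' i) = ∏ i, ∑ s, ∑ t, F i s t := by
  simp only [Fintype.prod_sum]

variable {C : ι → α → α → ℝ}

theorem sum_sum_prod_mul_apply (hC : ∀ i, ∑ s, ∑ t, C i s t = 1) (j : ι) (f : α → α → ℝ) :
    ∑ τ : ι → α, ∑ τ' : ι → α, (∏ i, C i (τ i) (τ' i)) * f (τ j) (τ' j) =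
      ∑ s, ∑ t, C j s t * f s t := by
  have hsplit : ∀ τ τ' : ι → α, (∏ i, C i (τ i) (τ' i)) * f (τ j) (τ' j) =
      ∏ i, C i (τ i) (τ' i) * (if i = j then f (τ i) (τ' i) else 1) := by
    intro τ τ'
    rw [prod_mul_distrib, prod_ite_eq' univ j, if_pos (mem_univ j)]
  simp_rw [hsplit]
  rw [sum_sum_prod_eq_prod_sum_sum fun i s t => C i s t * if i = j then f s t else 1,
    prod_eq_single j (fun i _ hij => by simp [hij, hC]) (by simp)]
  simp

theorem sum_prod_mul_card_ne [DecidableEq α] (hC : ∀ i, ∑ s, ∑ t, C i s t = 1) :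
    ∑ p : (ι → α) × (ι → α), (∏ i, C i (p.1 i) (p.2 i)) * (#{i | p.1 i ≠ p.2 i} : ℝ) =
      ∑ i, ∑ s, ∑ t, C i s t * (if s ≠ t then 1 else 0) := by
  simp_rw [card_filter, Nat.cast_sum, Nat.cast_ite, Nat.cast_one, Nat.cast_zero, mul_sum]
  rw [sum_comm]
  refine sum_congr rfl fun j _ => ?_
  rw [Fintype.sum_prod_type]
  exact sum_sum_prod_mul_apply hC j fun s t => if s ≠ t then 1 else 0

end ProductCoupling

section SpinUpdate

variable [Fintype V] (J : V → V → ℝ) (h : V → ℝ)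

theorem flipProb_eq_tanh (β : ℝ) (σ : V → Bool) (y : V) :
    flipProb J h β σ y = (1 - sp (σ y) * tanh (β / 2 * cavity J h σ y)) / 2 := by
  have hc := cosh_pos (β / 2 * cavity J h σ y)
  rw [flipProb, tanh_eq_sinh_div_cosh, neg_mul]
  cases σ y
  · rw [sp, if_neg Bool.false_ne_true, neg_mul_neg, mul_one, ← cosh_add_sinh]
    field_simp
    ring
  · rw [sp, if_pos rfl, mul_one, ← cosh_sub_sinh]
    field_simp

/-- The probability that the spin at `y` is `+1` after one ε-SCA step from `σ`: it is kept with
probability `1 - ε` and otherwise drawn from the heat-bath law with mean `tanh (β h̃_y(σ) / 2)`. -/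
noncomputable def spinUpProb (β ε : ℝ) (σ : V → Bool) (y : V) : ℝ :=
  (1 - ε) * (1 + sp (σ y)) / 2 + ε * (1 + tanh (β / 2 * cavity J h σ y)) / 2

theorem spinUpProb_sub (β ε : ℝ) (σ σ' : V → Bool) (y : V) :
    spinUpProb J h β ε σ y - spinUpProb J h β ε σ' y =
      (1 - ε) / 2 * (sp (σ y) - sp (σ' y)) +
        ε / 2 * (tanh (β / 2 * cavity J h σ y) - tanh (β / 2 * cavity J h σ' y)) := by
  rw [spinUpProb, spinUpProb]
  ring

theorem Peps_eq_prod_boolLaw [DecidableEq V] (β ε : ℝ) (σ τ : V → Bool) :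
    Peps J h β ε σ τ = ∏ y, boolLaw (spinUpProb J h β ε σ y) (τ y) := by
  rw [Peps, prod_filter, prod_filter, ← prod_mul_distrib]
  refine prod_congr rfl fun y _ => ?_
  rw [flipProb_eq_tanh, spinUpProb, boolLaw]
  cases τ y <;> cases σ y <;> simp [sp] <;> ring

theorem spinUpProb_mem_Icc (β : ℝ) {ε : ℝ} (hε : ε ∈ Set.Icc (0 : ℝ) 1) (σ : V → Bool) (y : V) :
    spinUpProb J h β ε σ y ∈ Set.Icc (0 : ℝ) 1 := by
  obtain ⟨hε0, hε1⟩ := hε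
  have htanh := abs_lt.mp (abs_tanh_lt_one (β / 2 * cavity J h σ y))
  rw [spinUpProb]
  cases σ y <;> simp only [sp, Bool.false_eq_true, if_true, if_false] <;>
    constructor <;> nlinarith

theorem cavity_update [DecidableEq V] (σ : V → Bool) (x : V) (b : Bool) (y : V) :
    cavity J h (Function.update σ x b) y = cavity J h σ y + J y x * (sp b - sp (σ x)) := by
  have hsummand : ∀ z, J y z * sp (Function.update σ x b z) =
      J y z * sp (σ z) + if z = x then J y x * (sp b - sp (σ x)) else 0 := by
    intro z
    rcases eq_or_ne z x with rfl | hzx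
    · simp only [Function.update_self, if_true]
      ring
    · simp [hzx]
  simp only [cavity, hsummand, sum_add_distrib, sum_ite_eq', mem_univ, if_true]
  ring

theorem abs_spinUpProb_sub_update_le [DecidableEq V] {β ε : ℝ} (hβ : 0 ≤ β)
    (hε : ε ∈ Set.Icc (0 : ℝ) 1) (σ : V → Bool) (x y : V) :
    |spinUpProb J h β ε σ y - spinUpProb J h β ε (Function.update σ x (!σ x)) y| ≤
      (if y = x then 1 - ε else 0) + ε * tanh (β * |J y x| / 2) := by
  set σ' := Function.update σ x (!σ x)
  set c := β / 2 * cavity J h σ y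
  set c' := β / 2 * cavity J h σ' y
  have hε_half : 0 ≤ (1 - ε) / 2 := by linarith [hε.2]
  have hε_half' : 0 ≤ ε / 2 := by linarith [hε.1]
  have hsp_flip : |sp (σ x) - sp (!σ x)| = 2 := by cases σ x <;> norm_num [sp]
  have hspin : |sp (σ y) - sp (σ' y)| = if y = x then 2 else 0 := by
    rcases eq_or_ne y x with rfl | hyx
    · simp only [σ', Function.update_self, if_true, hsp_flip]
    · simp [σ', hyx]
  have hfield : |c - c'| = β * |J y x| := by
    rw [← mul_sub, cavity_update, abs_mul, abs_of_nonneg (by positivity), sub_add_cancel_left,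
      abs_neg, abs_mul, abs_sub_comm, hsp_flip]
    ring
  calc |spinUpProb J h β ε σ y - spinUpProb J h β ε σ' y|
      = |(1 - ε) / 2 * (sp (σ y) - sp (σ' y)) + ε / 2 * (tanh c - tanh c')| := by
        rw [spinUpProb_sub]
    _ ≤ (1 - ε) / 2 * |sp (σ y) - sp (σ' y)| + ε / 2 * |tanh c - tanh c'| := by
        refine (abs_add_le _ _).trans_eq ?_
        rw [abs_mul, abs_mul, abs_of_nonneg hε_half, abs_of_nonneg hε_half']
    _ ≤ (1 - ε) / 2 * (if y = x then 2 else 0) + ε / 2 * (2 * tanh (|c - c'| / 2)) := by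
        rw [hspin]
        exact add_le_add_right (mul_le_mul_of_nonneg_left (abs_tanh_sub_tanh_le c c') hε_half') _
    _ = (if y = x then 1 - ε else 0) + ε * tanh (β * |J y x| / 2) := by
        rw [hfield]
        split_ifs <;> ring

end SpinUpdate

theorem epsSCA_coupling_single_flip_general [Fintype V] [DecidableEq V] [Nonempty V]
    (J : V → V → ℝ) (h : V → ℝ)
    (hsym : ∀ x y, J x y = J y x)
    (β : ℝ) (hβ : 0 ≤ β) (ε : ℝ) (hε : ε ∈ Set.Ioc (0 : ℝ) 1)
    (σ : V → Bool) (x : V) :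
    ∃ γ : (V → Bool) × (V → Bool) → ℝ,
      (∀ p, 0 ≤ γ p) ∧
      (∑ p : (V → Bool) × (V → Bool), γ p = 1) ∧
      (∀ τ, ∑ τ' : V → Bool, γ (τ, τ') = Peps J h β ε σ τ) ∧
      (∀ τ', ∑ τ : V → Bool, γ (τ, τ') = Peps J h β ε (Function.update σ x (!σ x)) τ') ∧
      ∑ p : (V → Bool) × (V → Bool),
          γ p * ((univ.filter (fun y => p.1 y ≠ p.2 y)).card : ℝ) ≤
        (1 - ε) + ε * univ.sup' univ_nonempty (fun u => ∑ y, Real.tanh (β * |J u y| / 2)) := by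
  have hε' : ε ∈ Set.Icc (0 : ℝ) 1 := Set.Ioc_subset_Icc_self hε
  set σ' := Function.update σ x (!σ x)
  set C : V → Bool → Bool → ℝ := fun y =>
    boolCoupling (spinUpProb J h β ε σ y) (spinUpProb J h β ε σ' y)
  have hC : ∀ y, ∑ s, ∑ t, C y s t = 1 := fun y => sum_sum_boolCoupling _ _
  refine ⟨fun p => ∏ y, C y (p.1 y) (p.2 y), fun p => prod_nonneg fun y _ =>
    boolCoupling_nonneg (spinUpProb_mem_Icc J h β hε' σ y) (spinUpProb_mem_Icc J h β hε' σ' y) _ _,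
    ?_, fun τ => ?_, fun τ' => ?_, ?_⟩
  · rw [Fintype.sum_prod_type, sum_sum_prod_eq_prod_sum_sum, prod_eq_one fun y _ => hC y]
  · rw [Peps_eq_prod_boolLaw, (Fintype.prod_sum fun y t => C y (τ y) t).symm]
    exact prod_congr rfl fun y _ => sum_boolCoupling_right _ _ _
  · rw [Peps_eq_prod_boolLaw, (Fintype.prod_sum fun y s => C y s (τ' y)).symm]
    exact prod_congr rfl fun y _ => sum_boolCoupling_left _ _ _
  calc ∑ p : (V → Bool) × (V → Bool), (∏ y, C y (p.1 y) (p.2 y)) * (#{y | p.1 y ≠ p.2 y} : ℝ)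
      = ∑ y, |spinUpProb J h β ε σ y - spinUpProb J h β ε σ' y| := by
        simp_rw [sum_prod_mul_card_ne hC, C, sum_sum_boolCoupling_mul_ne]
    _ ≤ ∑ y, ((if y = x then 1 - ε else 0) + ε * tanh (β * |J y x| / 2)) :=
        sum_le_sum fun y _ => abs_spinUpProb_sub_update_le J h hβ hε' σ x y
    _ = (1 - ε) + ε * ∑ y, tanh (β * |J x y| / 2) := by
        simp_rw [sum_add_distrib, sum_ite_eq', if_pos (mem_univ x), ← mul_sum, hsym x]
    _ ≤ (1 - ε) + ε * univ.sup' univ_nonempty (fun u => ∑ y, tanh (β * |J u y| / 2)) := by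
        gcongr
        · exact hε.1.le
        · exact le_sup' (fun u => ∑ y, tanh (β * |J u y| / 2)) (mem_univ x)

/-- with `r = (1−ε) + ε·max_u ∑_y tanh(β|J_{u,y}|/2)`, there exists a coupling γ
of `P_{β,ε}(σ,·)` and `P_{β,ε}(σ^x,·)` whose expected Hamming distance is at most r. -/
theorem epsSCA_coupling_single_flip [Fintype V] [DecidableEq V] [Nonempty V]
    (G : SimpleGraph V) (J : V → V → ℝ) (h : V → ℝ)
    (hsym : ∀ x y, J x y = J y x)
    (hJG : ∀ x y, ¬ G.Adj x y → J x y = 0)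
    (β : ℝ) (hβ : 0 ≤ β) (ε : ℝ) (hε : ε ∈ Set.Ioc (0 : ℝ) 1)
    (σ : V → Bool) (x : V) :
    ∃ γ : (V → Bool) × (V → Bool) → ℝ,
      (∀ p, 0 ≤ γ p) ∧
      (∑ p : (V → Bool) × (V → Bool), γ p = 1) ∧
      (∀ τ, ∑ τ' : V → Bool, γ (τ, τ') = Peps J h β ε σ τ) ∧
      (∀ τ', ∑ τ : V → Bool, γ (τ, τ') = Peps J h β ε (Function.update σ x (!σ x)) τ') ∧
      ∑ p : (V → Bool) × (V → Bool),
          γ p * ((univ.filter (fun y => p.1 y ≠ p.2 y)).card : ℝ) ≤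
        (1 - ε) + ε * univ.sup' univ_nonempty (fun u => ∑ y, Real.tanh (β * |J u y| / 2)) :=
  epsSCA_coupling_single_flip_general J h hsym β hβ ε hε σ x
end

section
/- Let σ, τ ∈ {-1,+1}^V be arbitrary spin configurations and set r = (1−ε) + ε · max_{u∈V} ∑_{y∈V} tanh(β |J_{u,y}| / 2). Then there exists a coupling of P_{β,ε}(σ,·) and P_{β,ε}(τ,·), i.e. a probability distribution γ on pairs (η,η') ∈ {-1,+1}^V × {-1,+1}^V whose marginals are P_{β,ε}(σ,·) and P_{β,ε}(τ,·), such that ∑_{(η,η')} γ(η,η') · |{y ∈ V : η_y ≠ η'_y}| ≤ r · |{y ∈ V : σ_y ≠ τ_y}|. -/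
open Real Finset

variable {V : Type*}

/-! Under `P_{β,ε}(σ, ·)` the new spins are independent, the spin at `x` flipping with probability
`ε p_x(σ)`, where `p_x(σ) = (1 - σ_x tanh (β h̃_x(σ) / 2)) / 2`. The product of the maximal
couplings of the one-site laws has expected Hamming distance `∑_x |q_x^σ(+1) - q_x^τ(+1)|`.
In that difference the lazy part contributes `1 - ε` exactly where `σ_x ≠ τ_x`, and the heat-bath
part is at most `(ε / 2) |tanh a - tanh b| ≤ ε tanh (|a - b| / 2)` with
`|a - b| ≤ β ∑_{z : σ_z ≠ τ_z} |J_{x,z}|`; subadditivity of `tanh` on `[0, ∞)` splits this over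
the disagreeing sites `z`. Summing over `x` and using `J_{x,z} = J_{z,x}`, each disagreeing site
costs at most the maximal row sum `max_u ∑_y tanh (β |J_{u,y}| / 2)`. -/

namespace Real

theorem tanh_sub_tanh (a b : ℝ) : tanh a - tanh b = sinh (a - b) / (cosh a * cosh b) := by
  rw [tanh_eq_sinh_div_cosh, tanh_eq_sinh_div_cosh, sinh_sub]
  field_simp [(cosh_pos a).ne', (cosh_pos b).ne']

theorem tanh_monotone : Monotone tanh := fun a b hab => by
  have : 0 ≤ tanh b - tanh a := by
    rw [tanh_sub_tanh]
    exact div_nonneg (sinh_nonneg_iff.2 (sub_nonneg.2 hab)) (by positivity)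
  linarith

theorem tanh_add_le_add_tanh {x y : ℝ} (hx : 0 ≤ x) (hy : 0 ≤ y) :
    tanh (x + y) ≤ tanh x + tanh y := by
  have hcosh_le : cosh y ≤ cosh (x + y) := by
    rw [cosh_le_cosh, abs_of_nonneg hy, abs_of_nonneg (add_nonneg hx hy)]
    linarith
  have hcosh : cosh y ≤ cosh (x + y) * cosh x :=
    hcosh_le.trans (le_mul_of_one_le_right (cosh_pos _).le (one_le_cosh x))
  have : tanh (x + y) - tanh x ≤ tanh y := by
    rw [tanh_sub_tanh, add_sub_cancel_left, tanh_eq_sinh_div_cosh]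
    exact div_le_div_of_nonneg_left (sinh_nonneg_iff.2 hy) (cosh_pos y) hcosh
  linarith

theorem tanh_sum_le_sum_tanh {ι : Type*} (s : Finset ι) (f : ι → ℝ) (hf : ∀ i ∈ s, 0 ≤ f i) :
    tanh (∑ i ∈ s, f i) ≤ ∑ i ∈ s, tanh (f i) :=
  le_sum_of_subadditive_on_pred tanh (0 ≤ ·) tanh_zero.le
    (fun _ _ hx hy => tanh_add_le_add_tanh hx hy) (fun _ _ => add_nonneg) f hf

/-- The key estimate is `cosh a * cosh b ≥ cosh ((a - b) / 2) ^ 2`, from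
`2 cosh a cosh b = cosh (a + b) + cosh (a - b)`. -/
theorem tanh_sub_tanh_le {a b : ℝ} (hba : b ≤ a) : tanh a - tanh b ≤ 2 * tanh ((a - b) / 2) := by
  set t := (a - b) / 2
  have hsinh : sinh (a - b) = 2 * sinh t * cosh t := by
    rw [← sinh_two_mul]; congr 1; ring
  have hcosh : cosh t ^ 2 ≤ cosh a * cosh b := by
    have hprod : 2 * (cosh a * cosh b) = cosh (a + b) + cosh (a - b) := by
      rw [cosh_add, cosh_sub]; ring
    have hdouble : cosh (a - b) = 2 * cosh t ^ 2 - 1 := by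
      rw [show a - b = 2 * t by ring, cosh_two_mul, cosh_sq']; ring
    nlinarith [one_le_cosh (a + b)]
  have ht : 0 ≤ sinh t := sinh_nonneg_iff.2 (div_nonneg (sub_nonneg.2 hba) two_pos.le)
  calc tanh a - tanh b = sinh (a - b) / (cosh a * cosh b) := tanh_sub_tanh a b
    _ ≤ sinh (a - b) / cosh t ^ 2 :=
      div_le_div_of_nonneg_left (by rw [hsinh]; positivity) (by positivity) hcosh
    _ = 2 * tanh t := by
      rw [hsinh, tanh_eq_sinh_div_cosh]; field_simp [(cosh_pos t).ne']

end Real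

section ProductCoupling

variable {ι α β : Type*} [Fintype ι] [DecidableEq ι] [Fintype α] [Fintype β]

theorem sum_prod_pi_pair (c : ι → α × β → ℝ) :
    ∑ p : (ι → α) × (ι → β), ∏ x, c x (p.1 x, p.2 x) = ∏ x, ∑ q, c x q := by
  rw [Fintype.prod_sum]
  exact Fintype.sum_equiv (Equiv.arrowProdEquivProdArrow ι (fun _ => α) (fun _ => β)).symm
    _ _ fun _ => rfl

theorem sum_prod_pi_pair_mul_apply (c : ι → α × β → ℝ) (hc : ∀ x, ∑ q, c x q = 1) (y : ι)
    (f : α × β → ℝ) :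
    ∑ p : (ι → α) × (ι → β), (∏ x, c x (p.1 x, p.2 x)) * f (p.1 y, p.2 y) =
      ∑ q, c y q * f q := by
  let e : ι → α × β → ℝ := fun x q => c x q * if x = y then f q else 1
  have he : ∀ p : (ι → α) × (ι → β),
      (∏ x, c x (p.1 x, p.2 x)) * f (p.1 y, p.2 y) = ∏ x, e x (p.1 x, p.2 x) := by
    intro p
    simp only [e, prod_mul_distrib, prod_ite_eq', mem_univ, if_true]
  have hsum : ∀ x, ∑ q, e x q = if x = y then ∑ q, c y q * f q else 1 := by
    intro x
    by_cases hxy : x = y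
    · subst hxy; simp [e]
    · simp [e, hxy, hc]
  rw [sum_congr rfl fun p _ => he p, sum_prod_pi_pair, prod_congr rfl fun x _ => hsum x,
    prod_ite_eq']
  simp

theorem sum_prod_pi_pair_mul_card_ne [DecidableEq α] (c : ι → α × α → ℝ)
    (hc : ∀ x, ∑ q, c x q = 1) :
    ∑ p : (ι → α) × (ι → α), (∏ x, c x (p.1 x, p.2 x)) * (#{y | p.1 y ≠ p.2 y} : ℝ) =
      ∑ y, ∑ q with q.1 ≠ q.2, c y q := by
  simp_rw [natCast_card_filter, mul_sum]
  rw [sum_comm]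
  refine sum_congr rfl fun y _ => ?_
  rw [sum_prod_pi_pair_mul_apply c hc y fun q => if q.1 ≠ q.2 then 1 else 0, sum_filter]
  simp only [mul_ite, mul_one, mul_zero]

end ProductCoupling

section BoolCoupling

variable (μ ν : Bool → ℝ)

noncomputable def boolMaxCoupling (q : Bool × Bool) : ℝ :=
  if q.1 = q.2 then min (μ q.1) (ν q.1) else max (μ q.1 - ν q.1) 0

theorem boolMaxCoupling_nonneg (hμ : ∀ b, 0 ≤ μ b) (hν : ∀ b, 0 ≤ ν b) (q : Bool × Bool) :
    0 ≤ boolMaxCoupling μ ν q := by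
  unfold boolMaxCoupling
  split_ifs
  · exact le_min (hμ _) (hν _)
  · exact le_max_right _ _

private theorem min_add_max_sub_zero (x y : ℝ) : min x y + max (x - y) 0 = x := by
  rcases le_total x y with hxy | hxy
  · rw [min_eq_left hxy, max_eq_right (by linarith)]; ring
  · rw [min_eq_right hxy, max_eq_left (by linarith)]; ring

theorem sum_boolMaxCoupling_fst (a : Bool) : ∑ b, boolMaxCoupling μ ν (a, b) = μ a := by
  cases a <;> simp [boolMaxCoupling, min_add_max_sub_zero, add_comm]

variable {μ ν} (hμν : μ true + μ false = ν true + ν false)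
include hμν

theorem sum_boolMaxCoupling_snd (b : Bool) : ∑ a, boolMaxCoupling μ ν (a, b) = ν b := by
  have hflip : ∀ c, μ c - ν c = ν (!c) - μ (!c) := by
    intro c; cases c <;> simp only [Bool.not_false, Bool.not_true] <;> linarith
  cases b <;> simp only [Fintype.sum_bool, boolMaxCoupling, hflip, Bool.not_true, Bool.not_false,
    Bool.true_eq_false, Bool.false_eq_true, ↓reduceIte]
  · rw [add_comm, min_comm, min_add_max_sub_zero]
  · rw [min_comm, min_add_max_sub_zero]

theorem sum_boolMaxCoupling_ne :
    ∑ q with q.1 ≠ q.2, boolMaxCoupling μ ν q = |μ true - ν true| := by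
  have hfalse : μ false - ν false = -(μ true - ν true) := by linarith
  simp only [sum_filter, Fintype.sum_prod_type, Fintype.sum_bool, boolMaxCoupling, ne_eq,
    Bool.true_eq_false, Bool.false_eq_true, not_true_eq_false, not_false_eq_true, ↓reduceIte,
    zero_add, add_zero, hfalse]
  exact max_zero_add_max_neg_zero_eq_abs_self _

end BoolCoupling

theorem exists_pi_bool_coupling {ι : Type*} [Fintype ι] [DecidableEq ι] (μ ν : ι → Bool → ℝ)
    (hμ : ∀ x b, 0 ≤ μ x b) (hν : ∀ x b, 0 ≤ ν x b)
    (hμ1 : ∀ x, μ x true + μ x false = 1) (hν1 : ∀ x, ν x true + ν x false = 1) :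
    ∃ γ : (ι → Bool) × (ι → Bool) → ℝ,
      (∀ p, 0 ≤ γ p) ∧
      (∑ p, γ p = 1) ∧
      (∀ η, ∑ η', γ (η, η') = ∏ x, μ x (η x)) ∧
      (∀ η', ∑ η, γ (η, η') = ∏ x, ν x (η' x)) ∧
      ∑ p, γ p * (#{y | p.1 y ≠ p.2 y} : ℝ) = ∑ x, |μ x true - ν x true| := by
  have hμν : ∀ x, μ x true + μ x false = ν x true + ν x false := fun x =>
    (hμ1 x).trans (hν1 x).symm
  let c : ι → Bool × Bool → ℝ := fun x => boolMaxCoupling (μ x) (ν x)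
  have hc : ∀ x, ∑ q, c x q = 1 := fun x => by
    rw [Fintype.sum_prod_type, Fintype.sum_bool, sum_boolMaxCoupling_fst, sum_boolMaxCoupling_fst,
      hμ1]
  refine ⟨fun p => ∏ x, c x (p.1 x, p.2 x), fun p => prod_nonneg fun x _ =>
      boolMaxCoupling_nonneg _ _ (hμ x) (hν x) _, ?_, fun η => ?_, fun η' => ?_, ?_⟩
  · rw [sum_prod_pi_pair, prod_congr rfl fun x _ => hc x, prod_const_one]
  · rw [← Fintype.prod_sum (fun x b => c x (η x, b))]
    exact prod_congr rfl fun x _ => sum_boolMaxCoupling_fst _ _ _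
  · rw [← Fintype.prod_sum (fun x b => c x (b, η' x))]
    exact prod_congr rfl fun x _ => sum_boolMaxCoupling_snd (hμν x) _
  · rw [sum_prod_pi_pair_mul_card_ne c hc]
    exact sum_congr rfl fun x _ => sum_boolMaxCoupling_ne (hμν x)

section SCA

variable [Fintype V] (J : V → V → ℝ) (h : V → ℝ) (β ε : ℝ)

theorem flipProb_eq (σ : V → Bool) (x : V) :
    flipProb J h β σ x = (1 - sp (σ x) * tanh (β / 2 * cavity J h σ x)) / 2 := by
  unfold flipProb
  set a := β / 2 * cavity J h σ x
  have hc := (cosh_pos a).ne'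
  cases σ x
  · rw [show -(β / 2) * cavity J h σ x * sp false = a by simp [a, sp],
      ← cosh_add_sinh, tanh_eq_sinh_div_cosh]
    field_simp
    simp [sp]
  · rw [show -(β / 2) * cavity J h σ x * sp true = -a by simp [a, sp],
      ← cosh_sub_sinh, tanh_eq_sinh_div_cosh]
    field_simp
    simp [sp]

theorem flipProb_nonneg (σ : V → Bool) (x : V) : 0 ≤ flipProb J h β σ x :=
  div_nonneg (exp_pos _).le (by positivity)

theorem flipProb_le_one (σ : V → Bool) (x : V) : flipProb J h β σ x ≤ 1 := by
  have htanh := abs_le.1 (abs_tanh_lt_one (β / 2 * cavity J h σ x)).le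
  rw [flipProb_eq]
  cases σ x <;> simp only [sp] <;> norm_num <;> linarith [htanh.1, htanh.2]

/-- The law of the new spin at `x` under `P_{β,ε}(σ, ·)`: it flips with probability `ε p_x(σ)`. -/
noncomputable def siteKernel (σ : V → Bool) (x : V) (b : Bool) : ℝ :=
  if b = σ x then 1 - ε * flipProb J h β σ x else ε * flipProb J h β σ x

variable {ε}

theorem siteKernel_nonneg (hε : ε ∈ Set.Icc (0 : ℝ) 1) (σ : V → Bool) (x : V) (b : Bool) :
    0 ≤ siteKernel J h β ε σ x b := by
  have hp0 := flipProb_nonneg J h β σ x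
  have hp1 := flipProb_le_one J h β σ x
  unfold siteKernel
  split_ifs
  · nlinarith [hε.1, hε.2]
  · exact mul_nonneg hε.1 hp0

theorem siteKernel_true_add_false (σ : V → Bool) (x : V) :
    siteKernel J h β ε σ x true + siteKernel J h β ε σ x false = 1 := by
  unfold siteKernel; cases σ x <;> simp

theorem siteKernel_true (σ : V → Bool) (x : V) :
    siteKernel J h β ε σ x true =
      (1 - ε) * (if σ x then 1 else 0) + ε * ((1 + tanh (β / 2 * cavity J h σ x)) / 2) := by
  unfold siteKernel
  rw [flipProb_eq]
  cases σ x
  · simp [sp]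
  · simp only [sp, if_true]; ring

theorem Peps_eq_prod_siteKernel [DecidableEq V] (σ η : V → Bool) :
    Peps J h β ε σ η = ∏ x, siteKernel J h β ε σ x (η x) := by
  rw [← prod_filter_mul_prod_filter_not univ (fun x => η x ≠ σ x)]
  unfold Peps
  congr 1
  · exact prod_congr rfl fun x hx => by simp [siteKernel, (mem_filter.1 hx).2]
  · refine prod_congr (by simp) fun x hx => ?_
    simp [siteKernel, (mem_filter.1 hx).2]

theorem abs_cavity_sub_cavity_le (σ τ : V → Bool) (x : V) :
    |cavity J h σ x - cavity J h τ x| ≤ 2 * ∑ z with σ z ≠ τ z, |J x z| := by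
  have hdiff : cavity J h σ x - cavity J h τ x = ∑ z, J x z * (sp (σ z) - sp (τ z)) := by
    simp only [cavity, mul_sub, sum_sub_distrib]; ring
  have hterm : ∀ z, |J x z * (sp (σ z) - sp (τ z))| ≤ if σ z ≠ τ z then 2 * |J x z| else 0 := by
    intro z; cases σ z <;> cases τ z <;> norm_num [sp, abs_mul] <;> linarith
  calc |cavity J h σ x - cavity J h τ x| ≤ ∑ z, |J x z * (sp (σ z) - sp (τ z))| :=
        hdiff ▸ abs_sum_le_sum_abs _ _
    _ ≤ ∑ z, if σ z ≠ τ z then 2 * |J x z| else 0 := sum_le_sum fun z _ => hterm z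
    _ = 2 * ∑ z with σ z ≠ τ z, |J x z| := by rw [← sum_filter, mul_sum]

theorem abs_siteKernel_true_sub_le (hβ : 0 ≤ β) (hε : ε ∈ Set.Icc (0 : ℝ) 1)
    (σ τ : V → Bool) (x : V) :
    |siteKernel J h β ε σ x true - siteKernel J h β ε τ x true| ≤
      (1 - ε) * (if σ x ≠ τ x then 1 else 0) +
        ε * ∑ z with σ z ≠ τ z, tanh (β * |J x z| / 2) := by
  rw [siteKernel_true, siteKernel_true]
  set a := β / 2 * cavity J h σ x
  set b := β / 2 * cavity J h τ x
  have hspin : |(if σ x then (1 : ℝ) else 0) - if τ x then 1 else 0| =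
      if σ x ≠ τ x then 1 else 0 := by
    cases σ x <;> cases τ x <;> norm_num
  have hfield : |a - b| / 2 ≤ ∑ z with σ z ≠ τ z, β * |J x z| / 2 := by
    have := abs_cavity_sub_cavity_le J h σ τ x
    rw [← sum_div, ← mul_sum, show a - b = β / 2 * (cavity J h σ x - cavity J h τ x) by ring,
      abs_mul, abs_of_nonneg (by positivity)]
    nlinarith
  have htanh : |tanh a - tanh b| ≤ 2 * ∑ z with σ z ≠ τ z, tanh (β * |J x z| / 2) :=
    (abs_tanh_sub_tanh_le a b).trans (mul_le_mul_of_nonneg_left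
      ((tanh_monotone hfield).trans (tanh_sum_le_sum_tanh _ _ fun z _ => by positivity))
      two_pos.le)
  calc _ = |(1 - ε) * ((if σ x then 1 else 0) - if τ x then 1 else 0) +
          ε / 2 * (tanh a - tanh b)| := by congr 1; ring
    _ ≤ (1 - ε) * |(if σ x then (1 : ℝ) else 0) - if τ x then 1 else 0| +
          ε / 2 * |tanh a - tanh b| := by
      refine (abs_add_le _ _).trans_eq ?_
      rw [abs_mul, abs_mul, abs_of_nonneg (sub_nonneg.2 hε.2 : (0 : ℝ) ≤ 1 - ε),
        abs_of_nonneg (by linarith [hε.1] : (0 : ℝ) ≤ ε / 2)]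
    _ ≤ _ := by rw [hspin]; nlinarith [hε.1]

theorem sum_abs_siteKernel_true_sub_le [Nonempty V] (hsym : ∀ x y, J x y = J y x)
    (hβ : 0 ≤ β) (hε : ε ∈ Set.Icc (0 : ℝ) 1) (σ τ : V → Bool) :
    ∑ x, |siteKernel J h β ε σ x true - siteKernel J h β ε τ x true| ≤
      ((1 - ε) + ε * univ.sup' univ_nonempty (fun u => ∑ y, tanh (β * |J u y| / 2))) *
        (#{y | σ y ≠ τ y} : ℝ) := by
  set M := univ.sup' univ_nonempty (fun u => ∑ y, tanh (β * |J u y| / 2))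
  have hrows : ∑ x, ∑ z with σ z ≠ τ z, tanh (β * |J x z| / 2) ≤ #{y | σ y ≠ τ y} * M :=
    calc _ = ∑ z with σ z ≠ τ z, ∑ x, tanh (β * |J z x| / 2) := by
          rw [sum_comm]
          exact sum_congr rfl fun z _ => sum_congr rfl fun x _ => by rw [hsym]
      _ ≤ ∑ _z with σ _z ≠ τ _z, M := sum_le_sum fun z _ =>
          le_sup' (fun u => ∑ y, tanh (β * |J u y| / 2)) (mem_univ z)
      _ = #{y | σ y ≠ τ y} * M := by rw [sum_const, nsmul_eq_mul]
  calc _ ≤ ∑ x, ((1 - ε) * (if σ x ≠ τ x then 1 else 0) +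
          ε * ∑ z with σ z ≠ τ z, tanh (β * |J x z| / 2)) :=
        sum_le_sum fun x _ => abs_siteKernel_true_sub_le J h β hβ hε σ τ x
    _ = (1 - ε) * #{y | σ y ≠ τ y} + ε * ∑ x, ∑ z with σ z ≠ τ z, tanh (β * |J x z| / 2) := by
        rw [sum_add_distrib, ← mul_sum, ← mul_sum, natCast_card_filter]
    _ ≤ (1 - ε) * #{y | σ y ≠ τ y} + ε * (#{y | σ y ≠ τ y} * M) := by gcongr; exact hε.1
    _ = _ := by ring

end SCA

theorem epsSCA_coupling_general_general [Fintype V] [DecidableEq V] [Nonempty V]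
    (J : V → V → ℝ) (h : V → ℝ)
    (hsym : ∀ x y, J x y = J y x)
    (β : ℝ) (hβ : 0 ≤ β) (ε : ℝ) (hε : ε ∈ Set.Ioc (0 : ℝ) 1)
    (σ τ : V → Bool) :
    ∃ γ : (V → Bool) × (V → Bool) → ℝ,
      (∀ p, 0 ≤ γ p) ∧
      (∑ p : (V → Bool) × (V → Bool), γ p = 1) ∧
      (∀ η, ∑ η' : V → Bool, γ (η, η') = Peps J h β ε σ η) ∧
      (∀ η', ∑ η : V → Bool, γ (η, η') = Peps J h β ε τ η') ∧
      ∑ p : (V → Bool) × (V → Bool),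
          γ p * ((univ.filter (fun y => p.1 y ≠ p.2 y)).card : ℝ) ≤
        ((1 - ε) + ε * univ.sup' univ_nonempty (fun u => ∑ y, Real.tanh (β * |J u y| / 2))) *
          ((univ.filter (fun y => σ y ≠ τ y)).card : ℝ) := by
  have hε' := Set.Ioc_subset_Icc_self hε
  obtain ⟨γ, hγ0, hγ1, hσ, hτ, hdist⟩ := exists_pi_bool_coupling
    (siteKernel J h β ε σ) (siteKernel J h β ε τ)
    (siteKernel_nonneg J h β hε' σ) (siteKernel_nonneg J h β hε' τ)
    (siteKernel_true_add_false J h β σ) (siteKernel_true_add_false J h β τ)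
  refine ⟨γ, hγ0, hγ1, fun η => by rw [hσ, Peps_eq_prod_siteKernel],
    fun η' => by rw [hτ, Peps_eq_prod_siteKernel], ?_⟩
  rw [hdist]
  exact sum_abs_siteKernel_true_sub_le J h β hsym hβ hε' σ τ

/-- with `r = (1−ε) + ε·max_u ∑_y tanh(β|J_{u,y}|/2)`, for arbitrary
configurations σ, τ there exists a coupling γ of `P_{β,ε}(σ,·)` and `P_{β,ε}(τ,·)` whose
expected Hamming distance is at most `r · |{y : σ_y ≠ τ_y}|`. -/
theorem epsSCA_coupling_general [Fintype V] [DecidableEq V] [Nonempty V]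
    (G : SimpleGraph V) (J : V → V → ℝ) (h : V → ℝ)
    (hsym : ∀ x y, J x y = J y x)
    (hJG : ∀ x y, ¬ G.Adj x y → J x y = 0)
    (β : ℝ) (hβ : 0 ≤ β) (ε : ℝ) (hε : ε ∈ Set.Ioc (0 : ℝ) 1)
    (σ τ : V → Bool) :
    ∃ γ : (V → Bool) × (V → Bool) → ℝ,
      (∀ p, 0 ≤ γ p) ∧
      (∑ p : (V → Bool) × (V → Bool), γ p = 1) ∧
      (∀ η, ∑ η' : V → Bool, γ (η, η') = Peps J h β ε σ η) ∧
      (∀ η', ∑ η : V → Bool, γ (η, η') = Peps J h β ε τ η') ∧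
      ∑ p : (V → Bool) × (V → Bool),
          γ p * ((univ.filter (fun y => p.1 y ≠ p.2 y)).card : ℝ) ≤
        ((1 - ε) + ε * univ.sup' univ_nonempty (fun u => ∑ y, Real.tanh (β * |J u y| / 2))) *
          ((univ.filter (fun y => σ y ≠ τ y)).card : ℝ) :=
  epsSCA_coupling_general_general J h hsym β hβ ε hε σ τ
end
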